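/- An n×n matrix D = [d_ij] is a generalized Euclidean distance matrix if and only if there exist positive reals a, b and vectors x^1,...,x^n in some Euclidean space with sum x^j = 0 such that d_ij = ⟨a x^i - b x^j, a x^i - b x^j⟩ for all i, j. -/

import Mathlib

/-! A generalized Laplacian is exactly the Gram matrix of vectors summing to zero: a positive
semidefinite `L = Bᴴ B` is the Gram matrix of the columns of `B`, and `L 1 = 0` forces
`‖∑ xⱼ‖² = 1ᵀ L 1 = 0`. Expanding `⟪a xᵢ - b xⱼ, a xᵢ - b xⱼ⟫` then gives the formula for `dᵢⱼ`. -/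

open Matrix
open scoped RealInnerProductSpace InnerProductSpace ComplexOrder

theorem real_inner_smul_sub_smul_self {E : Type*} [NormedAddCommGroup E] [InnerProductSpace ℝ E]
    (a b : ℝ) (u v : E) :
    ⟪a • u - b • v, a • u - b • v⟫ = a ^ 2 * ⟪u, u⟫ + b ^ 2 * ⟪v, v⟫ - 2 * a * b * ⟪u, v⟫ := by
  simp only [real_inner_sub_sub_self, real_inner_smul_left, real_inner_smul_right,
    real_inner_comm v u]
  ring

namespace Matrix

variable {𝕜 ι : Type*} [RCLike 𝕜] [Fintype ι]

open scoped MatrixOrder in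
theorem PosSemidef.exists_gram_eq {L : Matrix ι ι 𝕜} (hL : L.PosSemidef) :
    ∃ v : ι → EuclideanSpace 𝕜 ι, gram 𝕜 v = L := by
  classical
  obtain ⟨B, rfl⟩ := CStarAlgebra.nonneg_iff_eq_star_mul_self.mp hL.nonneg
  refine ⟨fun j => WithLp.toLp 2 (fun k => B k j), ?_⟩
  ext i j
  simp [gram_apply, PiLp.inner_apply, mul_apply, mul_comm]

theorem gram_mulVec_one_eq_zero_iff {E : Type*} [NormedAddCommGroup E] [InnerProductSpace 𝕜 E]
    {v : ι → E} : gram 𝕜 v *ᵥ (fun _ => 1) = 0 ↔ ∑ i, v i = 0 := by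
  refine ⟨fun h => inner_self_eq_zero (𝕜 := 𝕜).mp ?_, fun h => ?_⟩
  · simpa [h] using (star_dotProduct_gram_mulVec (𝕜 := 𝕜) v (fun _ => 1) (fun _ => 1)).symm
  · ext i
    simp [mulVec, dotProduct, gram_apply, ← inner_sum, h]

end Matrix

theorem stmt1 (n : ℕ) (D : Matrix (Fin n) (Fin n) ℝ) :
    (∃ a b : ℝ, 0 < a ∧ 0 < b ∧ ∃ L : Matrix (Fin n) (Fin n) ℝ,
      L.PosSemidef ∧ L *ᵥ (fun _ => (1 : ℝ)) = 0 ∧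
      ∀ i j, D i j = a ^ 2 * L i i + b ^ 2 * L j j - 2 * a * b * L i j) ↔
    (∃ a b : ℝ, 0 < a ∧ 0 < b ∧
      ∃ (m : ℕ) (x : Fin n → EuclideanSpace ℝ (Fin m)),
        (∑ j, x j) = 0 ∧
        ∀ i j, D i j = ⟪a • x i - b • x j, a • x i - b • x j⟫) := by
  constructor
  · rintro ⟨a, b, ha, hb, L, hL, hL1, hD⟩
    obtain ⟨x, rfl⟩ := hL.exists_gram_eq
    refine ⟨a, b, ha, hb, n, x, gram_mulVec_one_eq_zero_iff.mp hL1, fun i j => ?_⟩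
    simp only [hD, real_inner_smul_sub_smul_self, gram_apply]
  · rintro ⟨a, b, ha, hb, m, x, hx, hD⟩
    refine ⟨a, b, ha, hb, gram ℝ x, posSemidef_gram ℝ x, gram_mulVec_one_eq_zero_iff.mpr hx,
      fun i j => ?_⟩
    simp only [hD, real_inner_smul_sub_smul_self, gram_apply]
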